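/- arXiv:2601.20243 — 6 statements merged into one kernel-verified Lean document; each statement's English description precedes it below -/
import Mathlib

section
/- For every integer i with 0 ≤ i ≤ p, the identity Σ_{m=0}^{p} ((-1)^{p-m} / ((p-m)! m!)) · m^i · (m-p)^{p-i} = 1 holds. -/
open Finset fwdDiff

private lemma fd_delta_pow (k : ℕ) :
    Δ_[(1:ℝ)] (fun x : ℝ => x ^ k) = fun x : ℝ => ∑ l ∈ range k, (k.choose l : ℝ) * x ^ l := by
  funext x
  have h := add_pow x (1:ℝ) k
  simp only [one_pow, mul_one] at h
  rw [fwdDiff, h, Finset.sum_range_succ]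
  simp [mul_comm]

private lemma fd_zero : ∀ n k, k < n → (fwdDiff (1:ℝ))^[n] (fun x : ℝ => x ^ k) = 0 := by
  intro n
  induction n with
  | zero => intro k hk; omega
  | succ n IH =>
    intro k hk
    rw [Function.iterate_succ_apply, fd_delta_pow]
    have h2 : (fun x : ℝ => ∑ l ∈ range k, (k.choose l : ℝ) * x ^ l)
        = ∑ l ∈ range k, (k.choose l : ℝ) • (fun x : ℝ => x ^ l) := by
      funext x; simp [smul_eq_mul]
    rw [h2, fwdDiff_iter_finset_sum]
    apply Finset.sum_eq_zero
    intro l hl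
    rw [fwdDiff_iter_const_smul, IH l (by simp at hl; omega), smul_zero]

private lemma fd_top : ∀ n, (fwdDiff (1:ℝ))^[n] (fun x : ℝ => x ^ n) = fun _ => (n.factorial : ℝ) := by
  intro n
  induction n with
  | zero => funext x; simp
  | succ n IH =>
    rw [Function.iterate_succ_apply, fd_delta_pow]
    have h2 : (fun x : ℝ => ∑ l ∈ range (n+1), ((n+1).choose l : ℝ) * x ^ l)
        = (∑ l ∈ range n, ((n+1).choose l : ℝ) • (fun x : ℝ => x ^ l))
          + ((n+1).choose n : ℝ) • (fun x : ℝ => x ^ n) := by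
      funext x; simp [Finset.sum_range_succ, smul_eq_mul]
    rw [h2, fwdDiff_iter_add, fwdDiff_iter_finset_sum, fwdDiff_iter_const_smul, IH]
    funext x
    have hz : ∀ l ∈ range n, (fwdDiff (1:ℝ))^[n] (((n+1).choose l : ℝ) • fun x : ℝ => x ^ l) = 0 := by
      intro l hl
      rw [fwdDiff_iter_const_smul, fd_zero n l (by simpa using hl), smul_zero]
    rw [Pi.add_apply, Finset.sum_apply]
    rw [Finset.sum_eq_zero (fun l hl => by rw [hz l hl]; rfl)]
    simp [Nat.choose_succ_self_right, Nat.factorial_succ]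

private lemma fd_main (p i : ℕ) (hi : i ≤ p) :
    (fwdDiff (1:ℝ))^[p] (fun x : ℝ => x ^ i * (x - p) ^ (p - i)) = fun _ => (p.factorial : ℝ) := by
  have hexp : (fun x : ℝ => x ^ i * (x - p) ^ (p - i))
      = (∑ j ∈ range (p - i), (((p-i).choose j : ℝ) * (-(p:ℝ)) ^ (p - i - j)) •
          (fun x : ℝ => x ^ (i + j)))
        + (fun x : ℝ => x ^ p) := by
    funext x
    have h := add_pow x (-(p:ℝ)) (p - i)
    rw [Pi.add_apply, Finset.sum_apply]
    have hx : x - (p:ℝ) = x + (-(p:ℝ)) := by ring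
    rw [hx, h, Finset.mul_sum, Finset.sum_range_succ]
    simp only [Pi.smul_apply, smul_eq_mul, Nat.sub_self, pow_zero, mul_one,
      Nat.choose_self, Nat.cast_one]
    rw [← pow_add x i (p - i), Nat.add_sub_cancel' hi]
    congr 1
    apply Finset.sum_congr rfl
    intro j hj
    rw [pow_add]
    ring
  rw [hexp, fwdDiff_iter_add, fwdDiff_iter_finset_sum, fd_top]
  funext x
  rw [Pi.add_apply, Finset.sum_apply]
  rw [Finset.sum_eq_zero]
  · simp
  · intro j hj
    rw [fwdDiff_iter_const_smul, fd_zero p (i + j) (by simp at hj; omega), smul_zero]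
    rfl

theorem stmt1 (p : ℕ) (hp : 0 < p) (i : ℕ) (hi : i ≤ p) :
    ∑ m ∈ Finset.range (p + 1),
      ((-1 : ℝ) ^ (p - m) / ((Nat.factorial (p - m)) * (Nat.factorial m)))
        * (m : ℝ) ^ i * ((m : ℝ) - (p : ℝ)) ^ (p - i) = 1 := by
  have key := fwdDiff_iter_eq_sum_shift (1:ℝ) (fun x : ℝ => x ^ i * (x - p) ^ (p - i)) p 0
  rw [fd_main p i hi] at key
  have hpf : (p.factorial : ℝ) ≠ 0 := Nat.cast_ne_zero.mpr p.factorial_ne_zero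
  have : ∑ m ∈ Finset.range (p + 1),
      ((-1 : ℝ) ^ (p - m) / ((Nat.factorial (p - m)) * (Nat.factorial m)))
        * (m : ℝ) ^ i * ((m : ℝ) - (p : ℝ)) ^ (p - i)
      = (1 / (p.factorial : ℝ)) * ∑ k ∈ Finset.range (p + 1),
        ((-1 : ℤ) ^ (p - k) * (p.choose k : ℤ)) •
          ((fun x : ℝ => x ^ i * (x - p) ^ (p - i)) ((0:ℝ) + k • (1:ℝ))) := by
    rw [Finset.mul_sum]
    apply Finset.sum_congr rfl
    intro m hm
    simp only [Finset.mem_range] at hm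
    have hmp : m ≤ p := by omega
    have hch : (p.choose m : ℝ) * ((Nat.factorial m : ℝ) * (Nat.factorial (p - m) : ℝ))
        = (p.factorial : ℝ) := by
      rw [← Nat.cast_mul, ← Nat.cast_mul, ← mul_assoc,
        Nat.choose_mul_factorial_mul_factorial hmp]
    have hm0 : (Nat.factorial m : ℝ) ≠ 0 := Nat.cast_ne_zero.mpr m.factorial_ne_zero
    have hpm0 : (Nat.factorial (p - m) : ℝ) ≠ 0 := Nat.cast_ne_zero.mpr (p - m).factorial_ne_zero
    simp only [zsmul_eq_mul, Int.cast_mul, Int.cast_pow, Int.cast_neg, Int.cast_one,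
      Int.cast_natCast, nsmul_eq_mul, mul_one, zero_add]
    field_simp
    ring_nf
    rw [← hch]
    ring
  rw [this, ← key]
  simp [hpf]
end

section
/- For integers m ≤ p, the identity Σ_{i=m}^{p} ((-1)^i · i) / ((i-m)! · m^{p+1-i}) = (-1)^p / (p-m)! holds. -/
theorem stmt3 (p m : ℕ) (hm : 1 ≤ m) (hmp : m ≤ p) :
    ∑ i ∈ Finset.Icc m p,
      ((-1 : ℝ) ^ i * (i : ℝ)) / ((Nat.factorial (i - m)) * (m : ℝ) ^ (p + 1 - i))
      = (-1 : ℝ) ^ p / Nat.factorial (p - m) := by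
  induction p, hmp using Nat.le_induction with
  | base =>
    rw [Finset.Icc_self, Finset.sum_singleton]
    have h1 : m - m = 0 := by omega
    have h2 : m + 1 - m = 1 := by omega
    have hm0 : (m : ℝ) ≠ 0 := by exact Nat.cast_ne_zero.mpr (by omega)
    rw [h1, h2, Nat.factorial_zero, pow_one]
    field_simp
  | succ p hp ih =>
    have hm0 : (m : ℝ) ≠ 0 := by
      exact Nat.cast_ne_zero.mpr (by omega)
    rw [Finset.sum_Icc_succ_top (by omega)]
    have hstep : ∑ i ∈ Finset.Icc m p,
        ((-1 : ℝ) ^ i * (i : ℝ)) / ((Nat.factorial (i - m)) * (m : ℝ) ^ (p + 1 + 1 - i))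
        = (∑ i ∈ Finset.Icc m p,
            ((-1 : ℝ) ^ i * (i : ℝ)) / ((Nat.factorial (i - m)) * (m : ℝ) ^ (p + 1 - i))) / m := by
      rw [Finset.sum_div]
      refine Finset.sum_congr rfl fun i hi => ?_
      simp only [Finset.mem_Icc] at hi
      have h : p + 1 + 1 - i = (p + 1 - i) + 1 := by omega
      rw [h, pow_succ]
      ring
    rw [hstep, ih]
    have h3 : p + 1 + 1 - (p + 1) = 1 := by omega
    have h4 : p + 1 - m = (p - m) + 1 := by omega
    rw [h3, h4, pow_one, Nat.factorial_succ, pow_succ]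
    have hf : (Nat.factorial (p - m) : ℝ) ≠ 0 := by
      exact_mod_cast (Nat.factorial_pos _).ne'
    have hpm : ((p - m : ℕ) : ℝ) = (p : ℝ) - m := by
      push_cast [Nat.cast_sub hp]; ring
    have hc : (p : ℝ) - m + 1 ≠ 0 := by
      rw [← hpm]; positivity
    push_cast
    rw [hpm]
    field_simp
    ring
end

section
/- For any 0 ≤ s ≤ p-1, the functions defined on the subinterval I_s by B_i(λ₁,λ₂) = Σ_{m=s+1}^{i} ((-1)^{i-m} · i / ((i-m)! · m! · m^{p+1-i})) · (m·λ₁ - (p-m)·λ₂)^p for s+1 ≤ i ≤ p, together with their symmetric counterparts B_{2p+1-i}(λ₁,λ₂)|_{I_{p-1-s}} = B_i(λ₂,λ₁)|_{I_s}, satisfy Σ over all 2p functions evaluated on I_s equals 1 whenever λ₁ + λ₂ = 1; equivalently Σ_{i=s+1}^{s+p+1} B_i(λ₁,λ₂)|_{I_s} = 1. -/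
open Finset

/-- The `i`-th B-spline element basis function of degree `p` restricted to the
subinterval `I_s`, expressed in barycentric coordinates `(λ₁, λ₂)`:
`B_i|_{I_s}(λ₁,λ₂) = Σ_{m=s+1}^{i} ((-1)^{i-m} i / ((i-m)! m! m^{p+1-i})) (m λ₁ - (p-m) λ₂)^p`. -/
noncomputable def Bform (p i s : ℕ) (l1 l2 : ℝ) : ℝ :=
  ∑ m ∈ Finset.Icc (s + 1) i,
    ((-1 : ℝ) ^ (i - m) * (i : ℝ) /
        ((Nat.factorial (i - m)) * (Nat.factorial m) * (m : ℝ) ^ (p + 1 - i)))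
      * ((m : ℝ) * l1 - ((p : ℝ) - (m : ℝ)) * l2) ^ p

lemma tele (m : ℕ) (N : ℕ) :
    ∑ j ∈ range (N+1), (-1:ℝ)^j * ((m:ℝ)+j) * (m:ℝ)^j / (Nat.factorial j)
      = (-1)^N * (m:ℝ)^(N+1) / (Nat.factorial N) := by
  induction N with
  | zero => simp
  | succ N ih =>
    rw [Finset.sum_range_succ, ih]
    have h1 : (Nat.factorial (N+1) : ℝ) = ((N:ℝ)+1) * Nat.factorial N := by
      rw [Nat.factorial_succ]; push_cast; ring
    have h2 : (Nat.factorial N : ℝ) ≠ 0 := Nat.cast_ne_zero.mpr (Nat.factorial_ne_zero N)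
    rw [h1]; field_simp; push_cast; ring

lemma Dsum (p m : ℕ) (hm : 1 ≤ m) (hmp : m ≤ p) :
    ∑ i ∈ Icc m p, (-1:ℝ)^(i-m) * (i:ℝ) /
        ((Nat.factorial (i-m)) * (Nat.factorial m) * (m:ℝ)^(p+1-i))
      = (-1:ℝ)^(p-m) * (p.choose m) / (Nat.factorial p) := by
  have hm0 : (m:ℝ) ≠ 0 := by positivity
  set N := p - m with hN
  have hpm : p = m + N := by omega
  have key : ∀ j ∈ range (N+1),
      (-1:ℝ)^((m+j)-m) * ((m+j:ℕ):ℝ) /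
        ((Nat.factorial ((m+j)-m)) * (Nat.factorial m) * (m:ℝ)^(p+1-(m+j)))
      = ((-1:ℝ)^j * ((m:ℝ)+j) * (m:ℝ)^j / (Nat.factorial j))
          * (1 / ((Nat.factorial m) * (m:ℝ)^(N+1))) := by
    intro j hj
    simp only [mem_range] at hj
    have h1 : (m+j) - m = j := by omega
    have h2 : p + 1 - (m+j) = N + 1 - j := by omega
    have h3 : (m:ℝ)^(N+1) = (m:ℝ)^(N+1-j) * (m:ℝ)^j := by
      rw [← pow_add]; congr 1; omega
    have h4 : (m:ℝ)^(N+1-j) ≠ 0 := by positivity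
    have h5 : (Nat.factorial j : ℝ) ≠ 0 := Nat.cast_ne_zero.mpr (Nat.factorial_ne_zero j)
    have h6 : (Nat.factorial m : ℝ) ≠ 0 := Nat.cast_ne_zero.mpr (Nat.factorial_ne_zero m)
    rw [h1, h2, h3]
    push_cast
    field_simp
  rw [show Icc m p = Ico m (p+1) by rw [Finset.Ico_add_one_right_eq_Icc],
    Finset.sum_Ico_eq_sum_range, show p + 1 - m = N + 1 by omega,
    Finset.sum_congr rfl key, ← Finset.sum_mul, tele]
  have hc : (p.choose m : ℝ) * (Nat.factorial m) * (Nat.factorial N) = Nat.factorial p := by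
    exact_mod_cast congrArg (Nat.cast : ℕ → ℝ) (Nat.choose_mul_factorial_mul_factorial hmp)
  have h6 : (Nat.factorial m : ℝ) ≠ 0 := Nat.cast_ne_zero.mpr (Nat.factorial_ne_zero m)
  have h7 : (Nat.factorial N : ℝ) ≠ 0 := Nat.cast_ne_zero.mpr (Nat.factorial_ne_zero N)
  have h8 : (Nat.factorial p : ℝ) ≠ 0 := Nat.cast_ne_zero.mpr (Nat.factorial_ne_zero p)
  have h9 : (m:ℝ)^(N+1) ≠ 0 := by positivity
  field_simp
  linear_combination -hc

lemma findiff (n : ℕ) : ∀ j ≤ n, ∀ x : ℝ,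
    ∑ k ∈ range (n+1), (-1:ℝ)^k * (n.choose k) * (x - k)^j
      = if j = n then (Nat.factorial n : ℝ) else 0 := by
  induction n with
  | zero =>
    intro j hj x
    interval_cases j
    simp
  | succ n ih =>
    intro j hj x
    set g : ℕ → ℝ := fun k => (x - k)^j with hg
    set T : ℝ := ∑ k ∈ range (n+1), (-1:ℝ)^k * (n.choose k) * g k with hT
    set A : ℝ := ∑ k ∈ range (n+1), (-1:ℝ)^k * (n.choose k) * g (k+1) with hA
    have T1 : ∑ k ∈ range (n+1), (-1:ℝ)^(k+1) * (n.choose (k+1)) * g (k+1) = T - g 0 := by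
      have e1 : ∑ k ∈ range (n+2), (-1:ℝ)^k * (n.choose k) * g k = T := by
        rw [Finset.sum_range_succ]; simp [hT, Nat.choose_succ_self]
      have e2 : ∑ k ∈ range (n+2), (-1:ℝ)^k * (n.choose k) * g k
          = (∑ k ∈ range (n+1), (-1:ℝ)^(k+1) * (n.choose (k+1)) * g (k+1))
            + (-1:ℝ)^0 * (n.choose 0) * g 0 := Finset.sum_range_succ' _ _
      rw [e1] at e2
      simp only [pow_zero, Nat.choose_zero_right, Nat.cast_one, one_mul] at e2
      linarith
    have main : ∑ k ∈ range (n+2), (-1:ℝ)^k * ((n+1).choose k) * g k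
        = ∑ k ∈ range (n+1), (-1:ℝ)^k * (n.choose k) * (g k - g (k+1)) := by
      rw [Finset.sum_range_succ' (fun k => (-1:ℝ)^k * ((n+1).choose k) * g k)]
      have step : ∀ k ∈ range (n+1), (-1:ℝ)^(k+1) * (((n+1).choose (k+1) : ℕ) : ℝ) * g (k+1)
          = -((-1:ℝ)^k * (n.choose k) * g (k+1))
            + (-1:ℝ)^(k+1) * (n.choose (k+1)) * g (k+1) := by
        intro k _
        have : (((n+1).choose (k+1) : ℕ) : ℝ) = (n.choose k : ℝ) + (n.choose (k+1) : ℝ) := by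
          exact_mod_cast congrArg (Nat.cast : ℕ → ℝ) (Nat.choose_succ_succ n k)
        rw [this, pow_succ]; ring
      rw [Finset.sum_congr rfl step, Finset.sum_add_distrib, Finset.sum_neg_distrib, T1]
      simp only [mul_sub]
      rw [Finset.sum_sub_distrib, ← hA, ← hT]
      simp only [pow_zero, Nat.choose_zero_right, Nat.cast_one, one_mul]
      ring
    -- expand the difference of powers
    have gdiff : ∀ k : ℕ, g k - g (k+1)
        = ∑ t ∈ range j, (j.choose t : ℝ) * ((x-1) - k)^t := by
      intro k
      have hb : (x - (k:ℝ)) = ((x-1) - k) + 1 := by ring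
      have hb2 : g (k+1) = ((x-1) - k)^j := by
        simp only [hg]; push_cast; ring_nf
      have expand : g k = ∑ t ∈ range (j+1), (j.choose t : ℝ) * ((x-1) - k)^t := by
        simp only [hg]
        rw [hb, add_pow]
        apply Finset.sum_congr rfl
        intro t _
        simp [mul_comm]
      rw [expand, hb2, Finset.sum_range_succ]
      simp
    have swap : ∑ k ∈ range (n+1), (-1:ℝ)^k * (n.choose k) * (g k - g (k+1))
        = ∑ t ∈ range j, (j.choose t : ℝ)
            * ∑ k ∈ range (n+1), (-1:ℝ)^k * (n.choose k) * ((x-1) - k)^t := by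
      rw [Finset.sum_congr rfl (fun k _ => by rw [gdiff k, Finset.mul_sum])]
      rw [Finset.sum_comm]
      apply Finset.sum_congr rfl
      intro t _
      rw [Finset.mul_sum]
      apply Finset.sum_congr rfl
      intro k _
      ring
    rw [main, swap]
    by_cases hj1 : j = n + 1
    · subst hj1
      rw [Finset.sum_congr rfl (fun t ht => by
        rw [ih t (by simp at ht; omega) (x-1)])]
      rw [Finset.sum_eq_single n]
      · simp only [Nat.choose_succ_self_right, Nat.factorial_succ]
        push_cast; ring
      · intro t ht hne; simp [hne]
      · intro h; simp at h
    · have hj2 : j ≤ n := by omega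
      rw [Finset.sum_congr rfl (fun t ht => by
        rw [ih t (by simp at ht; omega)  (x-1)])]
      have : ∀ t ∈ range j, (j.choose t : ℝ) * (if t = n then (Nat.factorial n : ℝ) else 0) = 0 := by
        intro t ht
        simp only [mem_range] at ht
        have : t ≠ n := by omega
        simp [this]
      rw [Finset.sum_congr rfl this]
      simp [hj1]


/-- Summing over `a ≤ m ≤ i ≤ b` in the two orders. -/
lemma swap_Icc {M : Type*} [AddCommMonoid M] (a b : ℕ) (f : ℕ → ℕ → M) :
    (∑ i ∈ Icc a b, ∑ m ∈ Icc a i, f i m) = ∑ m ∈ Icc a b, ∑ i ∈ Icc m b, f i m := by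
  rw [Finset.sum_sigma', Finset.sum_sigma']
  refine sum_nbij' (fun x => ⟨x.2, x.1⟩) (fun x => ⟨x.2, x.1⟩) ?_ ?_ (fun _ _ => rfl)
    (fun _ _ => rfl) (fun _ _ => rfl) <;>
  simp only [Finset.mem_Icc, Sigma.forall, Finset.mem_sigma] <;>
  rintro a b ⟨⟨h₁, h₂⟩, ⟨h₃, h₄⟩⟩ <;> omega

/-- Reflecting a sum over an interval. -/
lemma sum_reflect {M : Type*} [AddCommMonoid M] (a b c : ℕ) (hac : a ≤ c) (hbc : b ≤ c) (f : ℕ → M) :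
    (∑ i ∈ Icc a b, f (c - i)) = ∑ j ∈ Icc (c - b) (c - a), f j := by
  refine sum_nbij' (fun i => c - i) (fun j => c - j) ?_ ?_ ?_ ?_ (fun _ _ => rfl) <;>
    simp only [Finset.mem_Icc] <;> intros <;> omega

/-- Partition of unity on each subinterval `I_s`: the `p` functions
`B_{s+1},...,B_p` together with the symmetric counterparts
`B_{2p+1-i}|_{I_{p-1-s}}(λ₁,λ₂) = B_i|_{I_s}(λ₂,λ₁)` (for `p+1 ≤ i ≤ s+p+1`)
sum to `1` whenever `λ₁ + λ₂ = 1`. -/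
theorem stmt4 (p s : ℕ) (hp : 1 ≤ p) (hs : s ≤ p - 1) (l1 l2 : ℝ) (h : l1 + l2 = 1) :
    (∑ i ∈ Finset.Icc (s + 1) p, Bform p i s l1 l2)
      + (∑ i ∈ Finset.Icc (p + 1) (s + p + 1), Bform p (2 * p + 1 - i) (p - 1 - s) l2 l1)
      = 1 := by
  have hsp : s + 1 ≤ p := by omega
  have hl2 : l2 = 1 - l1 := by linarith
  subst hl2
  set x : ℝ := (p:ℝ) * l1 with hx
  set t : ℕ → ℝ := fun k =>
    (-1:ℝ)^k * (p.choose k) / (Nat.factorial p) * (x - (k:ℝ))^p with ht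
  -- First sum
  have S1 : (∑ i ∈ Icc (s+1) p, Bform p i s l1 (1 - l1))
      = ∑ k ∈ Icc 0 (p - (s+1)), t k := by
    have e1 : ∀ i ∈ Icc (s+1) p, Bform p i s l1 (1-l1)
        = ∑ m ∈ Icc (s+1) i,
            ((-1:ℝ)^(i-m) * (i:ℝ) /
              ((Nat.factorial (i-m)) * (Nat.factorial m) * (m:ℝ)^(p+1-i)))
            * (x - ((p:ℝ) - (m:ℝ)))^p := by
      intro i _
      unfold Bform
      refine Finset.sum_congr rfl fun m _ => ?_
      congr 1
      ring
    rw [Finset.sum_congr rfl e1, swap_Icc]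
    have e2 : ∀ m ∈ Icc (s+1) p,
        (∑ i ∈ Icc m p, ((-1:ℝ)^(i-m) * (i:ℝ) /
            ((Nat.factorial (i-m)) * (Nat.factorial m) * (m:ℝ)^(p+1-i)))
          * (x - ((p:ℝ) - (m:ℝ)))^p)
        = t (p - m) := by
      intro m hm
      simp only [mem_Icc] at hm
      rw [← Finset.sum_mul, Dsum p m (by omega) hm.2]
      simp only [ht]
      rw [Nat.choose_symm hm.2, Nat.cast_sub hm.2]
    rw [Finset.sum_congr rfl e2, sum_reflect (s+1) p p hsp le_rfl, Nat.sub_self]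
  -- Second sum
  have S2 : (∑ i ∈ Icc (p+1) (s+p+1), Bform p (2*p+1-i) (p-1-s) (1-l1) l1)
      = ∑ k ∈ Icc (p - s) p, t k := by
    rw [sum_reflect (p+1) (s+p+1) (2*p+1) (by omega) (by omega)
      (fun j => Bform p j (p-1-s) (1-l1) l1)]
    rw [show 2*p+1 - (s+p+1) = p - s by omega, show 2*p+1 - (p+1) = p by omega]
    have e1 : ∀ j ∈ Icc (p-s) p, Bform p j (p-1-s) (1-l1) l1
        = ∑ m ∈ Icc (p-s) j,
            ((-1:ℝ)^(j-m) * (j:ℝ) /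
              ((Nat.factorial (j-m)) * (Nat.factorial m) * (m:ℝ)^(p+1-j)))
            * ((-1:ℝ)^p * (x - (m:ℝ))^p) := by
      intro j _
      unfold Bform
      rw [show p - 1 - s + 1 = p - s by omega]
      refine Finset.sum_congr rfl fun m _ => ?_
      congr 1
      rw [← neg_pow]
      congr 1
      ring
    rw [Finset.sum_congr rfl e1, swap_Icc]
    refine Finset.sum_congr rfl fun m hm => ?_
    simp only [mem_Icc] at hm
    have hm1 : 1 ≤ m := by omega
    rw [← Finset.sum_mul, Dsum p m hm1 hm.2]
    simp only [ht]
    have hsgn : (-1:ℝ)^(p-m) * (-1:ℝ)^p = (-1:ℝ)^m := by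
      rw [← pow_add, show p - m + p = m + 2*(p-m) by omega, pow_add, pow_mul]
      norm_num
    field_simp
    linear_combination ((p.choose m : ℝ) * (x - (m:ℝ))^p) * hsgn
  rw [S1, S2]
  have hsplit : (∑ k ∈ Icc 0 (p - (s+1)), t k) + (∑ k ∈ Icc (p-s) p, t k)
      = ∑ k ∈ range (p+1), t k := by
    rw [show Icc 0 (p - (s+1)) = Ico 0 (p - s) by ext k; simp only [mem_Icc, mem_Ico]; omega,
      ← Finset.Ico_add_one_right_eq_Icc, Finset.sum_Ico_consecutive t (Nat.zero_le _) (by omega),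
      Finset.range_eq_Ico]
  rw [hsplit]
  have hfd := findiff p p le_rfl x
  rw [if_pos rfl] at hfd
  have hfac : (Nat.factorial p : ℝ) ≠ 0 := Nat.cast_ne_zero.mpr (Nat.factorial_ne_zero p)
  have : ∀ k ∈ range (p+1), t k
      = ((-1:ℝ)^k * (p.choose k) * (x - (k:ℝ))^p) * (Nat.factorial p : ℝ)⁻¹ := by
    intro k _
    simp only [ht]
    ring
  rw [Finset.sum_congr rfl this, ← Finset.sum_mul, hfd]
  field_simp
end

section
/- For 1 ≤ i ≤ p and 0 ≤ s ≤ p-1, the sum identity Σ_{i=s+1}^{p} B_i(λ₁,λ₂)|_{I_s} = Σ_{m=s+1}^{p} ((-1)^{p-m} / (m!(p-m)!)) · (m·λ₁ - (p-m)·λ₂)^p holds, where B_i|_{I_s}(λ₁,λ₂) = Σ_{m=s+1}^{i} ((-1)^{i-m} i / ((i-m)! m! m^{p+1-i})) (m·λ₁-(p-m)·λ₂)^p. -/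
lemma T_eq (m : ℕ) : ∀ p, m ≤ p →
    ∑ i ∈ Finset.Icc m p,
      (-1:ℝ)^(i-m) * i * (m:ℝ)^i / (Nat.factorial (i-m))
    = (-1:ℝ)^(p-m) * (m:ℝ)^(p+1) / (Nat.factorial (p-m)) := by
  intro p hp
  induction p, hp using Nat.le_induction with
  | base =>
      simp [Finset.Icc_self, pow_succ]
      ring
  | succ p hp ih =>
      obtain ⟨n, rfl⟩ : ∃ n, p = m + n := ⟨p - m, by omega⟩
      rw [Finset.sum_Icc_succ_top (by omega), ih]
      have h1 : m + n + 1 - m = n + 1 := by omega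
      have h2 : m + n - m = n := by omega
      rw [h1, h2, Nat.factorial_succ]
      have hf : (Nat.factorial n : ℝ) ≠ 0 := by
        exact_mod_cast (Nat.factorial_pos _).ne'
      have hg : ((n:ℝ) + 1) ≠ 0 := by positivity
      push_cast
      field_simp
      ring

lemma coeff_eq (p m : ℕ) (hm : 1 ≤ m) (hmp : m ≤ p) :
    ∑ i ∈ Finset.Icc m p,
      (-1:ℝ)^(i-m) * i /
        ((Nat.factorial (i-m)) * (Nat.factorial m) * (m:ℝ)^(p+1-i))
    = (-1:ℝ)^(p-m) / ((Nat.factorial m) * (Nat.factorial (p-m))) := by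
  have hm0 : (m:ℝ) ≠ 0 := by positivity
  have hfm : (Nat.factorial m : ℝ) ≠ 0 := by
    exact_mod_cast (Nat.factorial_pos _).ne'
  have step : ∀ i ∈ Finset.Icc m p,
      (-1:ℝ)^(i-m) * i /
        ((Nat.factorial (i-m)) * (Nat.factorial m) * (m:ℝ)^(p+1-i))
      = ((-1:ℝ)^(i-m) * i * (m:ℝ)^i / (Nat.factorial (i-m)))
          / ((Nat.factorial m) * (m:ℝ)^(p+1)) := by
    intro i hi
    rw [Finset.mem_Icc] at hi
    have hsplit : (m:ℝ)^(p+1) = (m:ℝ)^(p+1-i) * (m:ℝ)^i := by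
      rw [← pow_add]; congr 1; omega
    have hfi : (Nat.factorial (i-m) : ℝ) ≠ 0 := by
      exact_mod_cast (Nat.factorial_pos _).ne'
    rw [hsplit]
    field_simp
  rw [Finset.sum_congr rfl step, ← Finset.sum_div, T_eq m p hmp]
  have hfn : (Nat.factorial (p-m) : ℝ) ≠ 0 := by
    exact_mod_cast (Nat.factorial_pos _).ne'
  field_simp

theorem stmt5 (p s : ℕ) (hp : 1 ≤ p) (hs : s ≤ p - 1) (l1 l2 : ℝ) :
    ∑ i ∈ Finset.Icc (s + 1) p, Bform p i s l1 l2
      = ∑ m ∈ Finset.Icc (s + 1) p,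
          ((-1 : ℝ) ^ (p - m) / ((Nat.factorial m) * (Nat.factorial (p - m))))
            * ((m : ℝ) * l1 - ((p : ℝ) - (m : ℝ)) * l2) ^ p := by
  unfold Bform
  rw [Finset.sum_comm' (s := Finset.Icc (s+1) p) (t := fun i => Finset.Icc (s+1) i)
      (t' := Finset.Icc (s+1) p) (s' := fun m => Finset.Icc m p)
      (by intro i m; simp only [Finset.mem_Icc]; omega)]
  refine Finset.sum_congr rfl fun m hm => ?_
  rw [Finset.mem_Icc] at hm
  rw [← Finset.sum_mul, coeff_eq p m (by omega) hm.2]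
end

section
/- Let B_i(x) = Σ_{m=1}^{i} ((-1)^{i-m} i / ((i-m)! m! m^{p+1-i})) (m λ₁(x) - (p-m) λ₂(x))^p on the interval (ξ₀, ξ₁) where λ₁ = (ξ₁-x)/h, λ₂ = (x-ξ₀)/h with h = ξ₁-ξ₀. Then the l-th derivative of B_i at x = ξ₀ (i.e., at λ₁=1, λ₂=0) vanishes for all 0 ≤ l ≤ i-2, so B_i has C^{i-2} smoothness across ξ₀ when extended by zero to the left. -/
lemma altsum (n : ℕ) : ∀ k : ℕ, k < n →
    ∑ m ∈ Finset.range (n+1), (-1:ℝ)^m * (n.choose m) * (m:ℝ)^k = 0 := by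
  induction n with
  | zero => intro k hk; omega
  | succ n ih =>
    intro k hk
    match k with
    | 0 =>
      have h := Int.alternating_sum_range_choose (n := n+1)
      rw [if_neg (Nat.succ_ne_zero n)] at h
      simp only [pow_zero, mul_one]
      exact_mod_cast h
    | (j+1) =>
      have hj : j < n := by omega
      rw [Finset.sum_range_succ']
      simp only [Nat.cast_zero, zero_pow (Nat.succ_ne_zero j), mul_zero, add_zero]
      have key : ∀ m' ∈ Finset.range (n+1),
          (-1:ℝ)^(m'+1) * ((n+1).choose (m'+1)) * ((m'+1:ℕ):ℝ)^(j+1)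
          = -((n:ℝ)+1) * ∑ t ∈ Finset.range (j+1),
              (j.choose t : ℝ) * ((-1:ℝ)^m' * (n.choose m') * (m':ℝ)^t) := by
        intro m' _
        have hc : ((n+1).choose (m'+1)) * (m'+1) = (n+1) * n.choose m' := by
          rw [← Nat.add_one_mul_choose_eq]
        have hcr : (((n+1).choose (m'+1)) : ℝ) * ((m':ℝ)+1) = ((n:ℝ)+1) * (n.choose m' : ℝ) := by
          exact_mod_cast congrArg (fun z : ℕ => (z : ℝ)) hc
        have hbin : ((m':ℝ)+1)^j = ∑ t ∈ Finset.range (j+1), (m':ℝ)^t * (j.choose t : ℝ) := by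
          have := add_pow (R := ℝ) (m' : ℝ) 1 j
          simpa using this
        push_cast
        rw [Finset.mul_sum]
        calc (-1:ℝ)^(m'+1) * ((n+1).choose (m'+1) : ℝ) * ((m':ℝ)+1)^(j+1)
            = ((-1:ℝ)^m' * (-1)) * ((((n+1).choose (m'+1) : ℝ)) * ((m':ℝ)+1)) * ((m':ℝ)+1)^j := by
              rw [pow_succ, pow_succ]; ring
          _ = ((-1:ℝ)^m' * (-1)) * (((n:ℝ)+1) * (n.choose m' : ℝ)) * ((m':ℝ)+1)^j := by rw [hcr]
          _ = _ := by
              rw [hbin, Finset.mul_sum]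
              apply Finset.sum_congr rfl
              intro t _
              ring
      rw [Finset.sum_congr rfl key, ← Finset.mul_sum, Finset.sum_comm]
      have : ∀ t ∈ Finset.range (j+1),
          ∑ m' ∈ Finset.range (n+1), (j.choose t : ℝ) * ((-1:ℝ)^m' * (n.choose m') * (m':ℝ)^t)
          = 0 := by
        intro t ht
        rw [← Finset.mul_sum, ih t (lt_of_le_of_lt (Nat.lt_succ_iff.mp (Finset.mem_range.mp ht)) hj), mul_zero]
      rw [Finset.sum_congr rfl this, Finset.sum_const, smul_zero, mul_zero]

lemma sumPowDeriv (S : Finset ℕ) (c a : ℕ → ℝ) (b : ℝ) (p : ℕ) :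
    ∀ l : ℕ,
    iteratedDeriv l (fun x : ℝ => ∑ m ∈ S, c m * (a m + b * x) ^ p)
      = fun x => ∑ m ∈ S, c m * (p.descFactorial l : ℝ) * b ^ l * (a m + b * x) ^ (p - l) := by
  intro l
  induction l with
  | zero => simp [iteratedDeriv_zero]
  | succ l ih =>
    rw [iteratedDeriv_succ, ih]
    funext x
    have H : HasDerivAt
        (fun x => ∑ m ∈ S, c m * (p.descFactorial l : ℝ) * b ^ l * (a m + b * x) ^ (p - l))
        (∑ m ∈ S, c m * (p.descFactorial (l+1) : ℝ) * b ^ (l+1) * (a m + b * x) ^ (p - (l+1))) x := by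
      apply HasDerivAt.fun_sum
      intro m _
      have h1 : HasDerivAt (fun x : ℝ => a m + b * x) b x := by
        simpa using ((hasDerivAt_id x).const_mul b).const_add (a m)
      have h2 := (h1.fun_pow (p - l)).const_mul (c m * (p.descFactorial l : ℝ) * b ^ l)
      refine h2.congr_deriv ?_
      have hd : (p.descFactorial (l+1) : ℝ) = ((p - l : ℕ) : ℝ) * (p.descFactorial l : ℝ) := by
        rw [Nat.descFactorial_succ]; push_cast; ring
      have he : p - (l+1) = p - l - 1 := by omega
      rw [hd, he]
      ring
    rw [H.deriv]

theorem stmt6 (p i : ℕ) (hp : 1 ≤ p) (hi1 : 1 ≤ i) (hip : i ≤ p)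
    (ξ0 ξ1 : ℝ) (hξ : ξ0 < ξ1) :
    ∀ l : ℕ, l + 2 ≤ i →
      iteratedDeriv l
        (fun x : ℝ =>
          ∑ m ∈ Finset.Icc 1 i,
            ((-1 : ℝ) ^ (i - m) * (i : ℝ) /
                ((Nat.factorial (i - m)) * (Nat.factorial m) * (m : ℝ) ^ (p + 1 - i)))
              * ((m : ℝ) * ((ξ1 - x) / (ξ1 - ξ0))
                  - ((p : ℝ) - (m : ℝ)) * ((x - ξ0) / (ξ1 - ξ0))) ^ p)
        ξ0 = 0 := by
  intro l hl
  have hh : (ξ1 - ξ0) ≠ 0 := sub_ne_zero.2 hξ.ne'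
  set b : ℝ := -(p:ℝ)/(ξ1-ξ0) with hb
  set a : ℕ → ℝ := fun m => ((m:ℝ)*ξ1 + ((p:ℝ)-(m:ℝ))*ξ0)/(ξ1-ξ0) with ha
  set c : ℕ → ℝ := fun m => (-1:ℝ)^(i-m) * (i:ℝ) /
      ((Nat.factorial (i-m)) * (Nat.factorial m) * (m:ℝ)^(p+1-i)) with hc
  have hfun : (fun x : ℝ =>
          ∑ m ∈ Finset.Icc 1 i,
            ((-1 : ℝ) ^ (i - m) * (i : ℝ) /
                ((Nat.factorial (i - m)) * (Nat.factorial m) * (m : ℝ) ^ (p + 1 - i)))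
              * ((m : ℝ) * ((ξ1 - x) / (ξ1 - ξ0))
                  - ((p : ℝ) - (m : ℝ)) * ((x - ξ0) / (ξ1 - ξ0))) ^ p)
      = fun x => ∑ m ∈ Finset.Icc 1 i, c m * (a m + b * x) ^ p := by
    funext x
    apply Finset.sum_congr rfl
    intro m _
    congr 2
    rw [ha, hb]
    field_simp
    ring
  rw [hfun, sumPowDeriv]
  simp only
  have hval : ∀ m : ℕ, a m + b * ξ0 = (m : ℝ) := by
    intro m
    rw [ha, hb]
    field_simp
    ring
  -- per-term rewrite
  set K : ℝ := (p.descFactorial l : ℝ) * b ^ l * (-1:ℝ)^i * (i:ℝ) / (Nat.factorial i) with hK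
  have hterm : ∀ m ∈ Finset.Icc 1 i,
      c m * (p.descFactorial l : ℝ) * b ^ l * (a m + b * ξ0) ^ (p - l)
      = K * ((-1:ℝ)^m * (i.choose m : ℝ) * (m:ℝ)^(i-1-l)) := by
    intro m hm
    obtain ⟨hm1, hm2⟩ := Finset.mem_Icc.mp hm
    rw [hval m]
    have hmpos : (0:ℝ) < (m:ℝ) := by exact_mod_cast hm1
    have hpowne : (m:ℝ)^(p+1-i) ≠ 0 := pow_ne_zero _ hmpos.ne'
    have hsplit : (m:ℝ) ^ (p - l) = (m:ℝ)^(p+1-i) * (m:ℝ)^(i-1-l) := by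
      rw [← pow_add]
      congr 1
      omega
    have hsign : (-1:ℝ)^(i-m) = (-1:ℝ)^i * (-1:ℝ)^m := by
      have h1 : (-1:ℝ)^(i-m) * (-1:ℝ)^m = (-1:ℝ)^i := by
        rw [← pow_add, Nat.sub_add_cancel hm2]
      calc (-1:ℝ)^(i-m) = (-1:ℝ)^(i-m) * ((-1:ℝ)^m * (-1:ℝ)^m) := by
            rw [← mul_pow]; norm_num
        _ = (-1:ℝ)^i * (-1:ℝ)^m := by rw [← mul_assoc, h1]
    have hcf : ((i.choose m : ℝ)) * (Nat.factorial m : ℝ) * (Nat.factorial (i-m) : ℝ)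
        = (Nat.factorial i : ℝ) := by
      exact_mod_cast congrArg (fun z : ℕ => (z:ℝ)) (Nat.choose_mul_factorial_mul_factorial hm2)
    have hf1 : (Nat.factorial (i-m) : ℝ) ≠ 0 := by positivity
    have hf2 : (Nat.factorial m : ℝ) ≠ 0 := by positivity
    have hf3 : (Nat.factorial i : ℝ) ≠ 0 := by positivity
    simp only [hc, hK, hsplit]
    rw [hsign]
    field_simp
    linear_combination (-((p.descFactorial l : ℝ) * (p:ℝ) ^ l * (ξ1 - ξ0)⁻¹ ^ l * (-1:ℝ)^l)) * hcf
  rw [Finset.sum_congr rfl hterm, ← Finset.mul_sum]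
  have hrange : Finset.range (i+1) = insert 0 (Finset.Icc 1 i) := by
    ext x
    simp [Finset.mem_range, Finset.mem_insert, Finset.mem_Icc]
    omega
  have hzero : ∑ m ∈ Finset.Icc 1 i, (-1:ℝ)^m * (i.choose m : ℝ) * (m:ℝ)^(i-1-l) = 0 := by
    have h0 := altsum i (i-1-l) (by omega)
    rw [hrange, Finset.sum_insert (by simp)] at h0
    have : ((0:ℕ):ℝ)^(i-1-l) = 0 := by
      rw [Nat.cast_zero]
      exact zero_pow (by omega)
    rw [this, mul_zero] at h0
    linarith
  rw [hzero, mul_zero]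
end

section
/- Let w be a polynomial of degree at most p on an interval [a,b] subdivided into p equal subintervals I_0,...,I_{p-1}. Suppose v is a C^{p-1} piecewise polynomial of degree at most p on this subdivision such that v and w agree together with their first p-1 derivatives at both endpoints a and b. Then v ≡ w on [a,b]. -/
open Polynomial

lemma taylor_factor (p : ℕ) (t : ℝ) (r : Polynomial ℝ)
    (hd : r.natDegree ≤ p) (h : ∀ l < p, (Polynomial.derivative^[l] r).eval t = 0) :
    ∃ c : ℝ, r = C c * (X - C t) ^ p := by
  refine ⟨(taylor t r).coeff p, ?_⟩
  have hg : taylor t r = C ((taylor t r).coeff p) * X ^ p := by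
    ext k
    rw [coeff_C_mul, coeff_X_pow]
    rcases lt_trichotomy k p with hk | hk | hk
    · rw [taylor_coeff, if_neg hk.ne, mul_zero]
      have h1 : (Nat.factorial k : ℝ) * (hasseDeriv k r).eval t = 0 := by
        have h2 : (Nat.factorial k • hasseDeriv k r : Polynomial ℝ) = Polynomial.derivative^[k] r := by
          rw [← Polynomial.factorial_smul_hasseDeriv]; rfl
        have := congrArg (fun f => Polynomial.eval t f) h2
        simpa [h k hk] using this
      have hk0 : (Nat.factorial k : ℝ) ≠ 0 := by positivity
      exact (mul_eq_zero.mp h1).resolve_left hk0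
    · subst hk; rw [if_pos rfl, mul_one]
    · rw [if_neg hk.ne', mul_zero, coeff_eq_zero_of_natDegree_lt]
      rw [natDegree_taylor]; omega
  have h2 : taylor (-t) (taylor t r) = r := by
    rw [taylor_taylor, neg_add_cancel, taylor_zero]
  calc r = taylor (-t) (C ((taylor t r).coeff p) * X ^ p) := by rw [← hg, h2]
    _ = C ((taylor t r).coeff p) * (X - C t) ^ p := by
        rw [taylor_apply]
        simp [mul_comp, pow_comp, sub_eq_add_neg]

/-- Uniqueness of the degree-`p`, `C^{p-1}` spline on the uniform `p`-subdivision
of `[a,b]` matching a degree-`≤ p` polynomial and its first `p-1` derivatives at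
both endpoints: the spline must equal the polynomial on every subinterval. -/
theorem stmt11 (p : ℕ) (hp : 1 ≤ p) (a b : ℝ) (hab : a < b)
    (w : Polynomial ℝ) (hw : w.natDegree ≤ p)
    (q : ℕ → Polynomial ℝ) (hdeg : ∀ s < p, (q s).natDegree ≤ p)
    (hsmooth : ∀ s, 1 ≤ s → s < p → ∀ l < p,
      (Polynomial.derivative^[l] (q (s - 1))).eval (a + s * (b - a) / p)
        = (Polynomial.derivative^[l] (q s)).eval (a + s * (b - a) / p))
    (hleft : ∀ l < p,
      (Polynomial.derivative^[l] (q 0)).eval a = (Polynomial.derivative^[l] w).eval a)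
    (hright : ∀ l < p,
      (Polynomial.derivative^[l] (q (p - 1))).eval b = (Polynomial.derivative^[l] w).eval b) :
    ∀ s < p, q s = w := by
  classical
  obtain ⟨x, hxdef⟩ : ∃ x : ℕ → ℝ, ∀ j, x j = a + j * (b - a) / p :=
    ⟨fun j => a + j * (b - a) / p, fun j => rfl⟩
  have hpR : (0:ℝ) < p := by exact_mod_cast hp
  have hx0 : x 0 = a := by simp [hxdef]
  have hxp : x p = b := by rw [hxdef]; field_simp; ring
  have hxmono : StrictMono x := by
    intro i j hij
    rw [hxdef, hxdef, mul_div_assoc, mul_div_assoc]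
    have hc : (0:ℝ) < (b - a) / p := by
      apply div_pos (by linarith) hpR
    have : (i:ℝ) < (j:ℝ) := by exact_mod_cast hij
    nlinarith
  set r : ℕ → Polynomial ℝ := fun s => q s - w with hrdef
  have hrdeg : ∀ s < p, (r s).natDegree ≤ p := fun s hs =>
    (natDegree_sub_le _ _).trans (max_le (hdeg s hs) hw)
  obtain ⟨c0, hc0⟩ : ∃ c, r 0 = C c * (X - C (x 0)) ^ p := by
    rw [hx0]
    apply taylor_factor p a (r 0) (hrdeg 0 hp)
    intro l hl
    simp [hrdef, Polynomial.iterate_derivative_sub, hleft l hl]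
  obtain ⟨cb, hcb⟩ : ∃ c, r (p-1) = C c * (X - C (x p)) ^ p := by
    rw [hxp]
    apply taylor_factor p b _ (hrdeg (p-1) (by omega))
    intro l hl
    simp [hrdef, Polynomial.iterate_derivative_sub, hright l hl]
  have hstep : ∀ s, 1 ≤ s → s < p → ∃ c, r s - r (s-1) = C c * (X - C (x s)) ^ p := by
    intro s h1 h2
    have hq : r s - r (s-1) = q s - q (s-1) := by simp [hrdef]
    rw [hq]
    apply taylor_factor p (x s) _
      ((natDegree_sub_le _ _).trans (max_le (hdeg s h2) (hdeg (s-1) (by omega))))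
    intro l hl
    rw [hxdef]
    simp [Polynomial.iterate_derivative_sub, hsmooth s h1 h2 l hl]
  set cs : ℕ → ℝ := fun s => if h : 1 ≤ s ∧ s < p then (hstep s h.1 h.2).choose else 0 with hcsdef
  have hcs_spec : ∀ s, 1 ≤ s → s < p → r s - r (s-1) = C (cs s) * (X - C (x s)) ^ p := by
    intro s h1 h2
    have : cs s = (hstep s h1 h2).choose := by
      rw [hcsdef]; exact dif_pos ⟨h1, h2⟩
    rw [this]
    exact (hstep s h1 h2).choose_spec
  have htel : ∀ s < p, r s = C c0 * (X - C (x 0)) ^ p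
      + ∑ j ∈ Finset.range s, C (cs (j+1)) * (X - C (x (j+1))) ^ p := by
    intro s hs
    induction s with
    | zero => simpa using hc0
    | succ n ih =>
      have h1 : r (n+1) - r n = C (cs (n+1)) * (X - C (x (n+1))) ^ p := by
        have := hcs_spec (n+1) (by omega) hs
        simpa using this
      rw [Finset.sum_range_succ, ← add_assoc, ← ih (by omega)]
      linear_combination h1
  -- the combined coefficient vector
  set D : ℕ → ℝ := fun j => if j = 0 then c0 else if j = p then -cb else cs j with hDdef
  set f : ℕ → Polynomial ℝ := fun j => C (D j) * (X - C (x j)) ^ p with hfdef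
  have hps : p - 1 + 1 = p := by omega
  have hsum : ∑ j ∈ Finset.range (p+1), f j = 0 := by
    rw [Finset.sum_range_succ]
    have h2 : ∑ j ∈ Finset.range p, f j = (∑ j ∈ Finset.range (p-1), f (j+1)) + f 0 := by
      rw [← hps]; exact Finset.sum_range_succ' f (p-1)
    have h3 : f 0 = C c0 * (X - C (x 0)) ^ p := by
      rw [hfdef]; simp [hDdef]
    have h4 : ∀ j ∈ Finset.range (p-1), f (j+1) = C (cs (j+1)) * (X - C (x (j+1))) ^ p := by
      intro j hj
      rw [Finset.mem_range] at hj
      rw [hfdef]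
      simp only [hDdef]
      rw [if_neg (by omega), if_neg (by omega)]
    have h5 : f p = -(C cb * (X - C (x p)) ^ p) := by
      rw [hfdef]
      simp only [hDdef]
      rw [if_neg (by omega)]
      simp [neg_mul]
    rw [h2, Finset.sum_congr rfl h4, h3, h5, ← hcb]
    have := htel (p-1) (by omega)
    rw [this]
    ring
  -- extract moments
  have hchoose : ∀ i : Fin (p+1), (p.choose (p - i.val) : ℝ) ≠ 0 := by
    intro i
    have : 0 < p.choose (p - i.val) := Nat.choose_pos (Nat.sub_le p i.val)
    exact_mod_cast this.ne'
  have hmom : ∀ i : Fin (p+1), ∑ j : Fin (p+1), D j.val * (-(x j.val)) ^ (i:ℕ) = 0 := by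
    intro i
    have hcoeff := congrArg (fun g => Polynomial.coeff g (p - i.val)) hsum
    simp only [Polynomial.finset_sum_coeff, Polynomial.coeff_zero] at hcoeff
    have hterm : ∀ j ∈ Finset.range (p+1),
        (f j).coeff (p - i.val) = (D j * (-(x j)) ^ (i:ℕ)) * (p.choose (p - i.val) : ℝ) := by
      intro j _
      rw [hfdef]
      simp only
      rw [coeff_C_mul]
      have : (X - C (x j) : Polynomial ℝ) = X + C (-(x j)) := by
        rw [map_neg]; ring
      rw [this, coeff_X_add_C_pow]
      have hi : p - (p - i.val) = i.val := by omega
      rw [hi]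
      ring
    rw [Finset.sum_congr rfl hterm, ← Finset.sum_mul] at hcoeff
    have := (mul_eq_zero.mp hcoeff).resolve_right (hchoose i)
    rw [← this, Fin.sum_univ_eq_sum_range (fun j => D j * (-(x j)) ^ (i:ℕ)) (p+1)]
  have hyinj : Function.Injective (fun j : Fin (p+1) => -(x j.val)) := by
    intro j k h
    simp only [neg_inj] at h
    exact Fin.val_injective (hxmono.injective h)
  have hD0 : (fun j : Fin (p+1) => D j.val) = 0 :=
    Matrix.eq_zero_of_forall_pow_sum_mul_pow_eq_zero hyinj hmom
  have hDzero : ∀ j, j ≤ p → D j = 0 := by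
    intro j hj
    have := congrFun hD0 ⟨j, by omega⟩
    simpa using this
  have hc0z : c0 = 0 := by
    simpa [hDdef] using hDzero 0 (by omega)
  have hcsz : ∀ j, 1 ≤ j → j < p → cs j = 0 := by
    intro j h1 h2
    have hj0 : j ≠ 0 := by omega
    have hjp : j ≠ p := by omega
    simpa [hDdef, hj0, hjp] using hDzero j (by omega)
  intro s hs
  have := htel s hs
  have hz : r s = 0 := by
    rw [this, hc0z]
    have hall : ∀ j ∈ Finset.range s, C (cs (j+1)) * (X - C (x (j+1))) ^ p = 0 := by
      intro j hj
      rw [Finset.mem_range] at hj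
      rw [hcsz (j+1) (by omega) (by omega)]
      simp
    rw [Finset.sum_congr rfl hall]
    simp
  have hqw : q s - w = 0 := hz
  exact sub_eq_zero.mp hqw
end
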